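/- Subadditivity of the TSP matching bound: in a complete weighted graph with triangle inequality, for any even-cardinality subset U of vertices, the minimum-weight perfect matching on U has weight at most half the weight of an optimal TSP tour on the whole vertex set. -/

import Mathlib

open Finset

/-- The weight of an (undirected) edge, given a symmetrized distance function. -/
noncomputable def edgeWeight {V : Type*} (d : V → V → ℝ) : Sym2 V → ℝ :=
  Sym2.lift ⟨fun a b => (d a b + d b a) / 2, fun a b => by ring⟩

/-- Total weight of a finite set of edges. -/
noncomputable def setWeight {V : Type*} (d : V → V → ℝ) (S : Finset (Sym2 V)) : ℝ :=
  ∑ e ∈ S, edgeWeight d e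

/-- A perfect matching on the vertex set `U`, given as its edge set: non-loop edges
such that every vertex of `U` lies on exactly one edge, and no other vertex on any. -/
def IsPerfectMatchingOn {V : Type*} [DecidableEq V] (U : Finset V)
    (M : Finset (Sym2 V)) : Prop :=
  (∀ e ∈ M, ¬ e.IsDiag) ∧
    ∀ v : V, (M.filter fun e => v ∈ e).card = if v ∈ U then 1 else 0

/-- The weight of the Hamiltonian tour visiting the vertices in the cyclic order `σ`. -/
noncomputable def tourWeight {V : Type*} (d : V → V → ℝ) {n : ℕ} [NeZero n]
    (σ : Fin n ≃ V) : ℝ :=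
  ∑ i : Fin n, d (σ i) (σ (i + 1))

/-!
Listing the vertices of `U` in the order in which the tour visits them gives a cycle
`u₀, …, u_{2m-1}` on `U`. By the triangle inequality each edge of this cycle weighs at most the
stretch of the tour between its endpoints, so the cycle weighs at most the tour. The even edges
`{u_{2t}, u_{2t+1}}` and the odd edges `{u_{2t+1}, u_{2t+2}}` are two perfect matchings on `U`
whose weights add up to the weight of the cycle, so the lighter one weighs at most half the tour.
-/

open Function
open Fin.NatCast

/-- `finRotate k i` is `i + 1`, written so that the empty cycle `k = 0` needs no `NeZero k`. -/
noncomputable def cycleWeight {V : Type*} (d : V → V → ℝ) {k : ℕ} (u : Fin k → V) : ℝ :=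
  ∑ i, d (u i) (u (finRotate k i))

section Shortcut

variable {V : Type*} {d : V → V → ℝ}

theorem le_sum_Ico_of_triangle (hdtri : ∀ a b c, d a c ≤ d a b + d b c) (f : ℕ → V)
    {a b : ℕ} (hab : a < b) : d (f a) (f b) ≤ ∑ x ∈ Ico a b, d (f x) (f (x + 1)) := by
  induction b, hab using Nat.le_induction with
  | base => simp
  | succ b hab ih =>
    rw [sum_Ico_succ_top (Nat.le_of_succ_le hab)]
    linarith [hdtri (f a) (f b) (f (b + 1))]

theorem sum_comp_le_sum_Ico_of_triangle (hdtri : ∀ a b c, d a c ≤ d a b + d b c) (f : ℕ → V)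
    {q : ℕ → ℕ} {t : ℕ} (hq : StrictMonoOn q (Set.Iic t)) :
    ∑ j ∈ range t, d (f (q j)) (f (q (j + 1))) ≤
      ∑ x ∈ Ico (q 0) (q t), d (f x) (f (x + 1)) := by
  induction t with
  | zero => simp
  | succ t ih =>
    have hq0 : q 0 ≤ q t := hq.monotoneOn (by simp) (by simp) (Nat.zero_le t)
    have hqt : q t < q (t + 1) := hq (by simp) (by simp) (Nat.lt_succ_self t)
    rw [sum_range_succ, ← sum_Ico_consecutive _ hq0 hqt.le]
    gcongr
    · exact ih (hq.mono (Set.Iic_subset_Iic.mpr t.le_succ))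
    · exact le_sum_Ico_of_triangle hdtri f hqt

theorem tourWeight_eq_sum_Ico {n : ℕ} [NeZero n] (σ : Fin n ≃ V) (a : ℕ) :
    tourWeight d σ = ∑ x ∈ Ico a (a + n), d (σ x) (σ ↑(x + 1)) := by
  rw [sum_Ico_eq_sum_range, Nat.add_sub_cancel_left,
    ← Fin.sum_univ_eq_sum_range (fun x => d (σ (a + x : ℕ)) (σ (a + x + 1 : ℕ))),
    tourWeight, ← Equiv.sum_comp (Equiv.addLeft (a : Fin n))]
  simp [add_assoc]

theorem cycleWeight_comp_le_tourWeight (hd0 : ∀ a b, 0 ≤ d a b)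
    (hdtri : ∀ a b c, d a c ≤ d a b + d b c) {n : ℕ} [NeZero n] (σ : Fin n ≃ V) {k : ℕ}
    (s : Fin k → Fin n) (hs : StrictMono s) : cycleWeight d (σ ∘ s) ≤ tourWeight d σ := by
  cases k with
  | zero => simpa [cycleWeight, tourWeight] using sum_nonneg fun i _ => hd0 _ _
  | succ k =>
    let f : ℕ → V := fun x => σ x
    -- Positions of `σ (s 0), …, σ (s k), σ (s 0)` along the tour, the last one a lap later.
    let q : ℕ → ℕ := fun j => s j + n * (j / (k + 1))
    have hfq : ∀ j, f (q j) = σ (s j) := by simp [f, q]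
    have hq : StrictMonoOn q (Set.Iic (k + 1)) := by
      refine strictMonoOn_Iic_of_lt_succ fun j hj => ?_
      rw [Order.succ_eq_add_one]
      have hq_lt : ∀ i (hi : i < k + 1), q i = s ⟨i, hi⟩ := fun i hi => by
        simp [q, Fin.natCast_eq_mk hi, Nat.div_eq_of_lt hi]
      rcases Nat.lt_or_ge (j + 1) (k + 1) with hj1 | hj1
      · rw [hq_lt j hj, hq_lt (j + 1) hj1]
        exact hs (Fin.mk_lt_mk.mpr j.lt_succ_self)
      · obtain rfl : j = k := by omega
        have hq_last : q (j + 1) = s 0 + n := by simp [q]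
        rw [hq_lt j hj, hq_last]
        exact (s _).isLt.trans_le (Nat.le_add_left n _)
    calc cycleWeight d (σ ∘ s)
        = ∑ j ∈ range (k + 1), d (f (q j)) (f (q (j + 1))) := by
          rw [cycleWeight, ← Fin.sum_univ_eq_sum_range (fun j => d (f (q j)) (f (q (j + 1))))]
          simp [hfq]
      _ ≤ ∑ x ∈ Ico (q 0) (q (k + 1)), d (f x) (f (x + 1)) :=
          sum_comp_le_sum_Ico_of_triangle hdtri f hq
      _ = tourWeight d σ := by
          rw [tourWeight_eq_sum_Ico σ (q 0)]
          congr 2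
          simp [q]

end Shortcut

theorem edgeWeight_mk {V : Type*} {d : V → V → ℝ} (hdsym : ∀ a b, d a b = d b a) (a b : V) :
    edgeWeight d s(a, b) = d a b := by
  simp [edgeWeight, hdsym b a]

section PairEdges

variable {V ι : Type*}

theorem apply_mem_pairEdge_iff {e : ι × Fin 2 → V} (he : Injective e) (i j : ι) (b : Fin 2) :
    e (j, b) ∈ s(e (i, 0), e (i, 1)) ↔ j = i := by
  fin_cases b <;> simp [he.eq_iff]

variable [DecidableEq V] [Fintype ι]

def pairEdges (e : ι × Fin 2 → V) : Finset (Sym2 V) :=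
  univ.image fun i => s(e (i, 0), e (i, 1))

theorem isPerfectMatchingOn_pairEdges {U : Finset V} {e : ι × Fin 2 → V} (he : Injective e)
    (hU : Set.range e = U) : IsPerfectMatchingOn U (pairEdges e) := by
  classical
  refine ⟨by simp [pairEdges, he.eq_iff], fun v => ?_⟩
  split_ifs with hv
  · obtain ⟨⟨j, b⟩, rfl⟩ : v ∈ Set.range e := hU ▸ hv
    simp [pairEdges, filter_image, apply_mem_pairEdge_iff he, filter_eq]
  · rw [card_eq_zero, filter_eq_empty_iff]
    simp only [pairEdges, mem_image, mem_univ, true_and, forall_exists_index,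
      forall_apply_eq_imp_iff, Sym2.mem_iff]
    rintro i (rfl | rfl) <;> exact hv (mem_coe.mp (hU ▸ Set.mem_range_self _))

theorem setWeight_pairEdges {d : V → V → ℝ} (hdsym : ∀ a b, d a b = d b a)
    {e : ι × Fin 2 → V} (he : Injective e) :
    setWeight d (pairEdges e) = ∑ i, d (e (i, 0)) (e (i, 1)) := by
  rw [setWeight, pairEdges, sum_image]
  · simp [edgeWeight_mk hdsym]
  · intro i _ j _ (hij : s(e (i, 0), e (i, 1)) = s(e (j, 0), e (j, 1)))
    rw [← apply_mem_pairEdge_iff he j i 0, ← hij]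
    exact Sym2.mem_mk_left _ _

end PairEdges

theorem finRotate_finProdFinEquiv_zero {m : ℕ} (t : Fin m) :
    finRotate (m * 2) (finProdFinEquiv (t, 0)) = finProdFinEquiv (t, 1) := by
  ext
  rw [finRotate_apply]
  have ht := t.isLt
  simp only [Fin.isValue, Fin.val_add, finProdFinEquiv_apply_val, Fin.coe_ofNat_eq_mod,
    Nat.zero_mod, zero_add, Nat.add_mod_mod, Nat.mod_succ]
  rw [Nat.mod_eq_of_lt (by omega), add_comm]

theorem cycleWeight_eq_sum_add_sum {V : Type*} (d : V → V → ℝ) {m : ℕ}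
    (u : Fin (m * 2) → V) :
    cycleWeight d u =
      ∑ t, d (u (finProdFinEquiv (t, 0))) (u (finProdFinEquiv (t, 1))) +
        ∑ t, d (u (finRotate _ (finProdFinEquiv (t, 0))))
          (u (finRotate _ (finProdFinEquiv (t, 1)))) := by
  rw [cycleWeight, ← finProdFinEquiv.sum_comp, Fintype.sum_prod_type, ← sum_add_distrib]
  simp only [Fin.sum_univ_two, finRotate_finProdFinEquiv_zero]

theorem tsp_matching_half_tour_bound_general {V : Type*} [DecidableEq V]
    {n : ℕ} [NeZero n]
    (d : V → V → ℝ)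
    (hd0 : ∀ a b, 0 ≤ d a b) (hdsym : ∀ a b, d a b = d b a)
    (hdtri : ∀ a b c, d a c ≤ d a b + d b c)
    (U : Finset V) (hU : Even U.card)
    (Astar : Fin n ≃ V) :
    ∃ M : Finset (Sym2 V), IsPerfectMatchingOn U M ∧
      setWeight d M ≤ tourWeight d Astar / 2 := by
  obtain ⟨m, hm⟩ : ∃ m, (U.map Astar.symm.toEmbedding).card = m * 2 := by
    obtain ⟨m, hm⟩ := hU
    exact ⟨m, by simp [hm, mul_two]⟩
  let s := (U.map Astar.symm.toEmbedding).orderEmbOfFin hm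
  let u : Fin (m * 2) → V := Astar ∘ s
  have hu : Injective u := Astar.injective.comp s.injective
  have hmatch (g : Fin m × Fin 2 ≃ Fin (m * 2)) : ∃ M, IsPerfectMatchingOn U M ∧
      setWeight d M = ∑ t, d (u (g (t, 0))) (u (g (t, 1))) := by
    refine ⟨pairEdges (u ∘ g), isPerfectMatchingOn_pairEdges (hu.comp g.injective) ?_,
      setWeight_pairEdges hdsym (hu.comp g.injective)⟩
    rw [EquivLike.range_comp]
    simp [u, s, Set.range_comp]
  -- `finProdFinEquiv (t, b) = 2 * t + b`, so these are the even and the odd edges of the cycle `u`.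
  obtain ⟨M₀, hM₀, hw₀⟩ := hmatch finProdFinEquiv
  obtain ⟨M₁, hM₁, hw₁⟩ := hmatch (finProdFinEquiv.trans (finRotate _))
  have hcycle := cycleWeight_comp_le_tourWeight hd0 hdtri Astar s s.strictMono
  rw [cycleWeight_eq_sum_add_sum] at hcycle
  simp only [Equiv.trans_apply] at hw₁
  rcases le_total (setWeight d M₀) (setWeight d M₁) with h | h
  · exact ⟨M₀, hM₀, by linarith⟩
  · exact ⟨M₁, hM₁, by linarith⟩

theorem tsp_matching_half_tour_bound {V : Type*} [Fintype V] [DecidableEq V]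
    {n : ℕ} [NeZero n] (hn : n = Fintype.card V) (hn2 : 2 ≤ n)
    (d : V → V → ℝ)
    (hd0 : ∀ a b, 0 ≤ d a b) (hdsym : ∀ a b, d a b = d b a)
    (hdtri : ∀ a b c, d a c ≤ d a b + d b c)
    (U : Finset V) (hU : Even U.card)
    (Astar : Fin n ≃ V)
    (hAstar : ∀ σ : Fin n ≃ V, tourWeight d Astar ≤ tourWeight d σ) :
    ∃ M : Finset (Sym2 V), IsPerfectMatchingOn U M ∧
      setWeight d M ≤ tourWeight d Astar / 2 :=
  tsp_matching_half_tour_bound_general d hd0 hdsym hdtri U hU Astar
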